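/- Let (M, λ_i) be an AP-space on ℝⁿ with n ≥ 2. The connection 𝚪^α_{μν} := Γ^α_{μν} − (1/(n−1)) δ^α_μ C_ν is a conformal connection: for every conformal change λ̄_i = e^{−ρ} λ_i with smooth ρ, the connection 𝚪̄ built from the λ̄_i equals 𝚪. -/

import Mathlib

open scoped BigOperators

noncomputable section

/-- Kronecker delta as a real number. -/
def kron {n : ℕ} (α μ : Fin n) : ℝ := if α = μ then 1 else 0

/-- Partial derivative `∂_ν f` of a scalar function on ℝⁿ. -/
def pd {n : ℕ} (ν : Fin n) (f : (Fin n → ℝ) → ℝ) (x : Fin n → ℝ) : ℝ :=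
  fderiv ℝ f x (Pi.single ν 1)

/-- Weitzenböck connection `Γ^α_{μν} = Σ_i λ_i^α ∂_ν λ_{i,μ}`. -/
def Wconn {n : ℕ} (lam lamCov : Fin n → (Fin n → ℝ) → Fin n → ℝ)
    (α μ ν : Fin n) (x : Fin n → ℝ) : ℝ :=
  ∑ i, lam i x α * pd ν (fun y => lamCov i y μ) x

/-- Torsion `Λ^α_{μν}` of the Weitzenböck connection. -/
def tors {n : ℕ} (lam lamCov : Fin n → (Fin n → ℝ) → Fin n → ℝ)
    (α μ ν : Fin n) (x : Fin n → ℝ) : ℝ :=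
  Wconn lam lamCov α μ ν x - Wconn lam lamCov α ν μ x

/-- Contracted torsion (basic vector) `C_μ = Λ^ε_{εμ}`. -/
def Cvec {n : ℕ} (lam lamCov : Fin n → (Fin n → ℝ) → Fin n → ℝ)
    (μ : Fin n) (x : Fin n → ℝ) : ℝ :=
  ∑ ε, tors lam lamCov ε ε μ x

/-- Metric `g_{μν} = Σ_i λ_{i,μ} λ_{i,ν}`. -/
def gmet {n : ℕ} (lamCov : Fin n → (Fin n → ℝ) → Fin n → ℝ)
    (μ ν : Fin n) (x : Fin n → ℝ) : ℝ :=
  ∑ i, lamCov i x μ * lamCov i x ν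

/-- Inverse metric `g^{μν} = Σ_i λ_i^μ λ_i^ν`. -/
def ginv {n : ℕ} (lam : Fin n → (Fin n → ℝ) → Fin n → ℝ)
    (μ ν : Fin n) (x : Fin n → ℝ) : ℝ :=
  ∑ i, lam i x μ * lam i x ν

/-- Levi-Civita connection (Christoffel symbols) of the metric `g`. -/
def LC {n : ℕ} (lam lamCov : Fin n → (Fin n → ℝ) → Fin n → ℝ)
    (α μ ν : Fin n) (x : Fin n → ℝ) : ℝ :=
  (1/2) * ∑ ε, ginv lam α ε x *
    (pd μ (fun y => gmet lamCov ε ν y) x + pd ν (fun y => gmet lamCov ε μ y) x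
      - pd ε (fun y => gmet lamCov μ ν y) x)

/-- Curvature tensor `R[A]^α_{μνσ}` of connection coefficients `A`. -/
def curv {n : ℕ} (A : Fin n → Fin n → Fin n → (Fin n → ℝ) → ℝ)
    (α μ ν σ : Fin n) (x : Fin n → ℝ) : ℝ :=
  pd ν (A α μ σ) x - pd σ (A α μ ν) x
    + ∑ ε, A ε μ σ x * A α ε ν x - ∑ ε, A ε μ ν x * A α ε σ x

/-- Conformal change of the contravariant components: `λ̄_i^μ = e^{-ρ} λ_i^μ`. -/
def confLam {n : ℕ} (ρ : (Fin n → ℝ) → ℝ) (lam : Fin n → (Fin n → ℝ) → Fin n → ℝ) :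
    Fin n → (Fin n → ℝ) → Fin n → ℝ :=
  fun i x μ => Real.exp (-(ρ x)) * lam i x μ

/-- Conformal change of the covariant components: `λ̄_{i,μ} = e^{ρ} λ_{i,μ}`. -/
def confLamCov {n : ℕ} (ρ : (Fin n → ℝ) → ℝ) (lamCov : Fin n → (Fin n → ℝ) → Fin n → ℝ) :
    Fin n → (Fin n → ℝ) → Fin n → ℝ :=
  fun i x μ => Real.exp (ρ x) * lamCov i x μ

/-- `ρ^α := g^{αε} ρ_ε`. -/
def rhoUp {n : ℕ} (lam : Fin n → (Fin n → ℝ) → Fin n → ℝ) (ρ : (Fin n → ℝ) → ℝ)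
    (α : Fin n) (x : Fin n → ℝ) : ℝ :=
  ∑ ε, ginv lam α ε x * pd ε ρ x

/-- `ρ² := ρ^ε ρ_ε`. -/
def rhoSq {n : ℕ} (lam : Fin n → (Fin n → ℝ) → Fin n → ℝ) (ρ : (Fin n → ℝ) → ℝ)
    (x : Fin n → ℝ) : ℝ :=
  ∑ ε, rhoUp lam ρ ε x * pd ε ρ x

/-- Covariant derivative of a covector field: `X_{μ|ν} = ∂_ν X_μ − A^ε_{μν} X_ε`. -/
def covD {n : ℕ} (A : Fin n → Fin n → Fin n → (Fin n → ℝ) → ℝ)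
    (X : Fin n → (Fin n → ℝ) → ℝ) (μ ν : Fin n) (x : Fin n → ℝ) : ℝ :=
  pd ν (X μ) x - ∑ ε, A ε μ ν x * X ε x

/-- Covariant derivative of a vector field: `X^α_{|ν} = ∂_ν X^α + A^α_{εν} X^ε`. -/
def covDUp {n : ℕ} (A : Fin n → Fin n → Fin n → (Fin n → ℝ) → ℝ)
    (X : Fin n → (Fin n → ℝ) → ℝ) (α ν : Fin n) (x : Fin n → ℝ) : ℝ :=
  pd ν (X α) x + ∑ ε, A α ε ν x * X ε x

/-- Symmetric part `Γ̂^α_{μν}` of the Weitzenböck connection. -/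
def symW {n : ℕ} (lam lamCov : Fin n → (Fin n → ℝ) → Fin n → ℝ)
    (α μ ν : Fin n) (x : Fin n → ℝ) : ℝ :=
  (1/2) * (Wconn lam lamCov α μ ν x + Wconn lam lamCov α ν μ x)

/-- The conformally invariant tensor `T^α_{μν}`. -/
def Ttens {n : ℕ} (lam lamCov : Fin n → (Fin n → ℝ) → Fin n → ℝ)
    (α μ ν : Fin n) (x : Fin n → ℝ) : ℝ :=
  tors lam lamCov α μ ν x
    - ((n : ℝ) - 1)⁻¹ * (kron α μ * Cvec lam lamCov ν x - kron α ν * Cvec lam lamCov μ x)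

/-- The conformally invariant tensor `K^α_{μνσ}`. -/
def Ktens {n : ℕ} (lam lamCov : Fin n → (Fin n → ℝ) → Fin n → ℝ)
    (α μ ν σ : Fin n) (x : Fin n → ℝ) : ℝ :=
  ((n : ℝ) - 1)⁻¹ *
    (kron α μ * pd σ (Cvec lam lamCov ν) x - kron α μ * pd ν (Cvec lam lamCov σ) x)

/-- The conformal connection `𝚪^α_{μν} = Γ^α_{μν} − (1/(n−1)) δ^α_μ C_ν`. -/
def bConn {n : ℕ} (lam lamCov : Fin n → (Fin n → ℝ) → Fin n → ℝ)
    (α μ ν : Fin n) (x : Fin n → ℝ) : ℝ :=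
  Wconn lam lamCov α μ ν x - ((n : ℝ) - 1)⁻¹ * (kron α μ * Cvec lam lamCov ν x)

/-- The conformal connection `𝚪̂^α_{μν} = Γ̂^α_{μν} − (1/(2(n−1)))(δ^α_μ C_ν + δ^α_ν C_μ)`. -/
def hatConn {n : ℕ} (lam lamCov : Fin n → (Fin n → ℝ) → Fin n → ℝ)
    (α μ ν : Fin n) (x : Fin n → ℝ) : ℝ :=
  symW lam lamCov α μ ν x
    - (2 * ((n : ℝ) - 1))⁻¹ * (kron α μ * Cvec lam lamCov ν x + kron α ν * Cvec lam lamCov μ x)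

/-- `C_{μ ĥ|ν}`: covariant derivative of `C` with respect to `Γ̂`. -/
def Chat {n : ℕ} (lam lamCov : Fin n → (Fin n → ℝ) → Fin n → ℝ)
    (μ ν : Fin n) (x : Fin n → ℝ) : ℝ :=
  covD (symW lam lamCov) (Cvec lam lamCov) μ ν x

/-- The conformally invariant tensor `B^α_{μνσ}`. -/
def Btens {n : ℕ} (lam lamCov : Fin n → (Fin n → ℝ) → Fin n → ℝ)
    (α μ ν σ : Fin n) (x : Fin n → ℝ) : ℝ :=
  curv (symW lam lamCov) α μ ν σ x
    - (2 * ((n : ℝ) - 1))⁻¹ *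
      (kron α μ * pd ν (Cvec lam lamCov σ) x - kron α μ * pd σ (Cvec lam lamCov ν) x
        + kron α σ * Chat lam lamCov μ ν x - kron α ν * Chat lam lamCov μ σ x
        - (2 * ((n : ℝ) - 1))⁻¹ * kron α ν * Cvec lam lamCov μ x * Cvec lam lamCov σ x
        + (2 * ((n : ℝ) - 1))⁻¹ * kron α σ * Cvec lam lamCov μ x * Cvec lam lamCov ν x)

/-- `C^σ := g^{σε} C_ε`. -/
def Cup {n : ℕ} (lam lamCov : Fin n → (Fin n → ℝ) → Fin n → ℝ)
    (σ : Fin n) (x : Fin n → ℝ) : ℝ :=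
  ∑ ε, ginv lam σ ε x * Cvec lam lamCov ε x

/-- `C² := C_ε C^ε = g^{εη} C_ε C_η`. -/
def Csq {n : ℕ} (lam lamCov : Fin n → (Fin n → ℝ) → Fin n → ℝ)
    (x : Fin n → ℝ) : ℝ :=
  ∑ ε, Cvec lam lamCov ε x * Cup lam lamCov ε x

/-- The tensor `S_{μν} := ρ_{μ;ν} − ρ_μ ρ_ν − ½ g_{μν} ρ²`. -/
def Stens {n : ℕ} (lam lamCov : Fin n → (Fin n → ℝ) → Fin n → ℝ)
    (ρ : (Fin n → ℝ) → ℝ) (μ ν : Fin n) (x : Fin n → ℝ) : ℝ :=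
  covD (LC lam lamCov) (fun μ => pd μ ρ) μ ν x
    - pd μ ρ x * pd ν ρ x - (1/2) * gmet lamCov μ ν x * rhoSq lam ρ x

/-- The conformal connection `𝚪°^α_{μν} = Γ°^α_{μν} − (1/(n−1))(δ^α_μ C_ν + δ^α_ν C_μ − g_{μν} C^α)`. -/
def oConn {n : ℕ} (lam lamCov : Fin n → (Fin n → ℝ) → Fin n → ℝ)
    (α μ ν : Fin n) (x : Fin n → ℝ) : ℝ :=
  LC lam lamCov α μ ν x
    - ((n : ℝ) - 1)⁻¹ *
      (kron α μ * Cvec lam lamCov ν x + kron α ν * Cvec lam lamCov μ x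
        - gmet lamCov μ ν x * Cup lam lamCov α x)

end


section Aux
variable {n : ℕ}

lemma pd_mul (ν : Fin n) (f g : (Fin n → ℝ) → ℝ) (x : Fin n → ℝ)
    (hf : DifferentiableAt ℝ f x) (hg : DifferentiableAt ℝ g x) :
    pd ν (fun y => f y * g y) x = pd ν f x * g x + f x * pd ν g x := by
  simp only [pd, fderiv_fun_mul hf hg, ContinuousLinearMap.add_apply,
    ContinuousLinearMap.smul_apply, smul_eq_mul]
  ring

lemma pd_exp (ν : Fin n) (ρ : (Fin n → ℝ) → ℝ) (x : Fin n → ℝ)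
    (hρ : DifferentiableAt ℝ ρ x) :
    pd ν (fun y => Real.exp (ρ y)) x = Real.exp (ρ x) * pd ν ρ x := by
  simp only [pd, fderiv_exp hρ, ContinuousLinearMap.smul_apply, smul_eq_mul]

lemma Wconn_conf (ρ : (Fin n → ℝ) → ℝ) (hρ : ContDiff ℝ (⊤ : ℕ∞) ρ)
    (lam lamCov : Fin n → (Fin n → ℝ) → Fin n → ℝ)
    (hlamCov : ∀ i μ, ContDiff ℝ (⊤ : ℕ∞) fun x => lamCov i x μ)
    (hinv : ∀ (x : Fin n → ℝ) (μ ν : Fin n), ∑ i, lam i x μ * lamCov i x ν = kron μ ν)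
    (α μ ν : Fin n) (x : Fin n → ℝ) :
    Wconn (confLam ρ lam) (confLamCov ρ lamCov) α μ ν x
      = Wconn lam lamCov α μ ν x + kron α μ * pd ν ρ x := by
  have hexp : DifferentiableAt ℝ (fun y => Real.exp (ρ y)) x :=
    (Real.differentiable_exp.comp (hρ.differentiable (by simp))).differentiableAt
  have hders : ∀ i, pd ν (fun y => confLamCov ρ lamCov i y μ) x
      = Real.exp (ρ x) * (pd ν ρ x * lamCov i x μ + pd ν (fun y => lamCov i y μ) x) := by
    intro i
    have h1 := pd_mul ν (fun y => Real.exp (ρ y)) (fun y => lamCov i y μ) x hexp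
      ((hlamCov i μ).differentiable (by simp) x)
    have h2 := pd_exp ν ρ x (hρ.differentiable (by simp) x)
    simp only [confLamCov]
    rw [h1, h2]; ring
  simp only [Wconn, confLam]
  calc ∑ i, Real.exp (-(ρ x)) * lam i x α * pd ν (fun y => confLamCov ρ lamCov i y μ) x
      = ∑ i, (lam i x α * lamCov i x μ * pd ν ρ x
          + lam i x α * pd ν (fun y => lamCov i y μ) x) := by
        refine Finset.sum_congr rfl fun i _ => ?_
        rw [hders i]
        have : Real.exp (-(ρ x)) * Real.exp (ρ x) = 1 := by
          rw [← Real.exp_add]; simp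
        linear_combination (lam i x α * (pd ν ρ x * lamCov i x μ
          + pd ν (fun y => lamCov i y μ) x)) * this
    _ = _ := by
        rw [Finset.sum_add_distrib, ← Finset.sum_mul, hinv x α μ]; ring

lemma Cvec_conf (ρ : (Fin n → ℝ) → ℝ) (hρ : ContDiff ℝ (⊤ : ℕ∞) ρ)
    (lam lamCov : Fin n → (Fin n → ℝ) → Fin n → ℝ)
    (hlamCov : ∀ i μ, ContDiff ℝ (⊤ : ℕ∞) fun x => lamCov i x μ)
    (hinv : ∀ (x : Fin n → ℝ) (μ ν : Fin n), ∑ i, lam i x μ * lamCov i x ν = kron μ ν)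
    (μ : Fin n) (x : Fin n → ℝ) :
    Cvec (confLam ρ lam) (confLamCov ρ lamCov) μ x
      = Cvec lam lamCov μ x + ((n : ℝ) - 1) * pd μ ρ x := by
  simp only [Cvec, tors]
  have h := Wconn_conf ρ hρ lam lamCov hlamCov hinv
  have : ∀ ε : Fin n,
      Wconn (confLam ρ lam) (confLamCov ρ lamCov) ε ε μ x
        - Wconn (confLam ρ lam) (confLamCov ρ lamCov) ε μ ε x
      = (Wconn lam lamCov ε ε μ x - Wconn lam lamCov ε μ ε x)
        + (pd μ ρ x - kron ε μ * pd ε ρ x) := by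
    intro ε
    rw [h ε ε μ x, h ε μ ε x]
    simp [kron]; ring
  rw [Finset.sum_congr rfl (fun ε _ => this ε), Finset.sum_add_distrib]
  congr 1
  rw [Finset.sum_sub_distrib]
  have h1 : ∑ _ε : Fin n, pd μ ρ x = (n : ℝ) * pd μ ρ x := by
    simp [mul_comm]
  have h2 : ∑ ε : Fin n, kron ε μ * pd ε ρ x = pd μ ρ x := by
    simp [kron, Finset.sum_ite_eq']
  rw [h1, h2]; ring

end Aux

theorem bConn_is_conformal
    {n : ℕ} (hn : 2 ≤ n)
    (lam lamCov : Fin n → (Fin n → ℝ) → Fin n → ℝ)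
    (hlam : ∀ i μ, ContDiff ℝ (⊤ : ℕ∞) fun x => lam i x μ)
    (hlamCov : ∀ i μ, ContDiff ℝ (⊤ : ℕ∞) fun x => lamCov i x μ)
    (hinv : ∀ (x : Fin n → ℝ) (μ ν : Fin n), ∑ i, lam i x μ * lamCov i x ν = kron μ ν)
    (hinv' : ∀ (x : Fin n → ℝ) (i j : Fin n), ∑ μ, lam i x μ * lamCov j x μ = kron i j)
    :
    ∀ (ρ : (Fin n → ℝ) → ℝ), ContDiff ℝ (⊤ : ℕ∞) ρ →
      ∀ (x : Fin n → ℝ) (α μ ν : Fin n),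
        bConn (confLam ρ lam) (confLamCov ρ lamCov) α μ ν x
          = bConn lam lamCov α μ ν x := by
  intro ρ hρ x α μ ν
  have hW := Wconn_conf ρ hρ lam lamCov hlamCov hinv α μ ν x
  have hC := Cvec_conf ρ hρ lam lamCov hlamCov hinv ν x
  have hne : ((n : ℝ) - 1) ≠ 0 := by
    have : (2 : ℝ) ≤ (n : ℝ) := by exact_mod_cast hn
    linarith
  simp only [bConn, hW, hC]
  field_simp
  ring
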